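/- Let p be the i.i.d. Bernoulli(q) measure on {0,1}ⁿ, 0 < q < 1, and let 𝓜 be the path measure of a stationary two-state Markov chain with parameters 0 < ε, δ < 1 and q = ε/(ε+δ). If the entropy rate H(𝓜) = (δ/(ε+δ))h(ε) + (ε/(ε+δ))h(δ) differs from the binary entropy h(q), then the Bhattacharyya coefficient Σ_{x∈{0,1}ⁿ} √(p(x)𝓜(x)) → 0 as n → ∞; consequently the fidelity F(𝔐, ρ_st^⊗n) between the corresponding diagonal quantum states tends to 0. -/

import Mathlib

open Matrix Filter
open scoped Classical ComplexOrder

/-- The positive semidefinite square root of a matrix (junk value `0` off PSD matrices). -/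

noncomputable def psdSqrt {d : Type*} [Fintype d] [DecidableEq d]
    (A : Matrix d d ℂ) : Matrix d d ℂ :=
  if h : A.PosSemidef then (h.1.eigenvectorUnitary : Matrix d d ℂ) *
    diagonal ((↑) ∘ (Real.sqrt ·) ∘ h.1.eigenvalues) *
    (star (h.1.eigenvectorUnitary : Matrix d d ℂ)) else 0

/-- Uhlmann fidelity `F(ρ,σ) = (tr √(√σ ρ √σ))²`. -/

noncomputable def qFidelity {d : Type*} [Fintype d] [DecidableEq d]
    (ρ σ : Matrix d d ℂ) : ℝ :=
  ((psdSqrt (psdSqrt σ * ρ * psdSqrt σ)).trace.re) ^ 2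

/-- Probability of the path `x` of a Markov chain on `Fin 2` with initial
distribution `π` and transition matrix `P`. -/

noncomputable def pathProb (P : Matrix (Fin 2) (Fin 2) ℝ) (π : Fin 2 → ℝ)
    {n : ℕ} (x : Fin n → Fin 2) : ℝ :=
  (if h : 0 < n then π (x ⟨0, h⟩) else 1) *
  ∏ i : Fin n, if h : (i : ℕ) + 1 < n then P (x i) (x ⟨(i : ℕ) + 1, h⟩) else 1

/-- The `n`-fold tensor power of a `2×2` matrix, as a matrix indexed by
binary strings `Fin n → Fin 2`. -/

noncomputable def tensorPow (ρ : Matrix (Fin 2) (Fin 2) ℂ) (n : ℕ) :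
    Matrix (Fin n → Fin 2) (Fin n → Fin 2) ℂ :=
  fun x y => ∏ i : Fin n, ρ (x i) (y i)

/-- Binary entropy (in bits). -/

noncomputable def binEnt (p : ℝ) : ℝ :=
  -(p * Real.logb 2 p) - (1 - p) * Real.logb 2 (1 - p)

/-!
Write `B n = ∑ₓ √(p(x) 𝓜(x))`. Extending a path by one symbol `b` multiplies `p` by `π b`
and `𝓜` by `P a b`, where `a` is the last symbol, so `B (n + 1) ≤ r * B n` with `r` the largest
Bhattacharyya coefficient between `π` and a row of `P`. A row of `P` equals `π` only when
`ε + δ = 1`, i.e. when the chain is i.i.d., and then its entropy rate is `h(q)`. Hence under the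
hypothesis both rows differ from `π`, strict AM–GM gives `r < 1`, and `B n` decays
geometrically. For the commuting states the fidelity is `(B n)²`.
-/

open Finset

lemma binEnt_one_sub (p : ℝ) : binEnt (1 - p) = binEnt p := by
  unfold binEnt; ring_nf

lemma entropyRate_eq_binEnt_of_add_eq_one {ε δ : ℝ} (h : ε + δ = 1) :
    δ / (ε + δ) * binEnt ε + ε / (ε + δ) * binEnt δ = binEnt (ε / (ε + δ)) := by
  obtain rfl : δ = 1 - ε := by linarith
  rw [h, binEnt_one_sub, div_one, div_one]
  ring

lemma sqrt_mul_add_sqrt_mul_lt_one {a b c d : ℝ} (ha : 0 ≤ a) (hb : 0 ≤ b) (hc : 0 ≤ c)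
    (hd : 0 ≤ d) (hab : a + b = 1) (hcd : c + d = 1) (hac : a ≠ c) :
    √(a * c) + √(b * d) < 1 := by
  have hac' : √(a * c) < (a + c) / 2 := by
    have hpos : 0 < a + c := by
      by_contra! h
      exact hac (by linarith)
    rw [Real.sqrt_lt' (by positivity)]
    nlinarith [sq_pos_of_ne_zero (sub_ne_zero.2 hac)]
  have hbd : √(b * d) ≤ (b + d) / 2 := by
    rw [Real.sqrt_le_left (by positivity)]
    nlinarith [sq_nonneg (b - d)]
  linarith

lemma twoStateChain_bhattacharyya_row_lt_one {ε δ : ℝ} (hε0 : 0 < ε) (hε1 : ε < 1)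
    (hδ0 : 0 < δ) (hδ1 : δ < 1) (hεδ : ε + δ ≠ 1) (a : Fin 2) :
    ∑ b, √(![δ / (ε + δ), ε / (ε + δ)] b * !![1 - ε, ε; δ, 1 - δ] a b) < 1 := by
  have hs : 0 < ε + δ := by linarith
  have hsum : δ / (ε + δ) + ε / (ε + δ) = 1 := by field_simp; ring
  have hne : ∀ {x : ℝ}, 0 < x → x / (ε + δ) ≠ x := fun hx h =>
    hεδ (by rw [div_eq_iff hs.ne'] at h; nlinarith)
  have hnn : ∀ {x : ℝ}, 0 < x → 0 ≤ x / (ε + δ) := fun hx => by positivity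
  fin_cases a <;>
    simp only [Fin.zero_eta, Fin.mk_one, Fin.isValue, of_apply, cons_val', cons_val_fin_one,
      cons_val_zero, cons_val_one, Fin.sum_univ_two]
  · rw [add_comm]
    exact sqrt_mul_add_sqrt_mul_lt_one (hnn hε0) (hnn hδ0) hε0.le (by linarith)
      (by linarith) (by ring) (hne hε0)
  · exact sqrt_mul_add_sqrt_mul_lt_one (hnn hδ0) (hnn hε0) hδ0.le (by linarith)
      hsum (by ring) (hne hδ0)

lemma Fin.sum_univ_snoc {M α : Type*} [AddCommMonoid M] [Fintype α] {n : ℕ}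
    (f : (Fin (n + 1) → α) → M) :
    ∑ y, f y = ∑ x : Fin n → α, ∑ b, f (Fin.snoc x b) := by
  rw [← (Fin.snocEquiv fun _ => α).sum_comp, Fintype.sum_prod_type, Finset.sum_comm]
  rfl

lemma pathProb_nonneg {P : Matrix (Fin 2) (Fin 2) ℝ} {π : Fin 2 → ℝ} (hP : ∀ a b, 0 ≤ P a b)
    (hπ : ∀ a, 0 ≤ π a) {n : ℕ} (x : Fin n → Fin 2) : 0 ≤ pathProb P π x := by
  unfold pathProb
  refine mul_nonneg ?_ (prod_nonneg fun i _ => ?_) <;> split_ifs <;> simp [hP, hπ]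

lemma pathProb_snoc (P : Matrix (Fin 2) (Fin 2) ℝ) (π : Fin 2 → ℝ) {n : ℕ}
    (x : Fin (n + 1) → Fin 2) (b : Fin 2) :
    pathProb P π (Fin.snoc x b : Fin (n + 2) → Fin 2) =
      pathProb P π x * P (x (Fin.last n)) b := by
  simp [pathProb, Fin.prod_univ_castSucc, Fin.snoc, mul_assoc]

noncomputable def iidMarkovBhattacharyya (w : Fin 2 → ℝ) (P : Matrix (Fin 2) (Fin 2) ℝ)
    (π : Fin 2 → ℝ) (n : ℕ) : ℝ :=
  ∑ x : Fin n → Fin 2, √((∏ i, w (x i)) * pathProb P π x)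

section Contraction

variable {w : Fin 2 → ℝ} {P : Matrix (Fin 2) (Fin 2) ℝ} {π : Fin 2 → ℝ}

lemma iidMarkovBhattacharyya_nonneg (n : ℕ) : 0 ≤ iidMarkovBhattacharyya w P π n :=
  sum_nonneg fun _ _ => Real.sqrt_nonneg _

lemma iidMarkovBhattacharyya_succ_succ_le (hw : ∀ b, 0 ≤ w b) (hP : ∀ a b, 0 ≤ P a b)
    {r : ℝ} (hr : ∀ a, ∑ b, √(w b * P a b) ≤ r) (n : ℕ) :
    iidMarkovBhattacharyya w P π (n + 2) ≤ r * iidMarkovBhattacharyya w P π (n + 1) := by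
  unfold iidMarkovBhattacharyya
  calc ∑ y : Fin (n + 2) → Fin 2, √((∏ i, w (y i)) * pathProb P π y)
      = ∑ x : Fin (n + 1) → Fin 2, ∑ b, √((∏ i, w (Fin.snoc x b i : Fin 2)) *
          pathProb P π (Fin.snoc x b : Fin (n + 2) → Fin 2)) := Fin.sum_univ_snoc _
    _ = ∑ x : Fin (n + 1) → Fin 2, √((∏ i, w (x i)) * pathProb P π x) *
          ∑ b, √(w b * P (x (Fin.last n)) b) := by
        refine sum_congr rfl fun x _ => ?_
        rw [mul_sum]
        refine sum_congr rfl fun b _ => ?_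
        rw [pathProb_snoc, Fin.prod_univ_castSucc, ← Real.sqrt_mul' _ (mul_nonneg (hw b) (hP _ b))]
        simp only [Fin.snoc_castSucc, Fin.snoc_last]
        ring_nf
    _ ≤ ∑ x : Fin (n + 1) → Fin 2, √((∏ i, w (x i)) * pathProb P π x) * r := by
        gcongr with x
        exact hr _
    _ = r * ∑ x : Fin (n + 1) → Fin 2, √((∏ i, w (x i)) * pathProb P π x) := by
        rw [← sum_mul, mul_comm]

lemma tendsto_iidMarkovBhattacharyya_zero (hw : ∀ b, 0 ≤ w b) (hP : ∀ a b, 0 ≤ P a b)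
    (hrow : ∀ a, ∑ b, √(w b * P a b) < 1) :
    Tendsto (iidMarkovBhattacharyya w P π) atTop (nhds 0) := by
  set r := max (∑ b, √(w b * P 0 b)) (∑ b, √(w b * P 1 b))
  have hr : ∀ a, ∑ b, √(w b * P a b) ≤ r :=
    Fin.forall_fin_two.2 ⟨le_max_left _ _, le_max_right _ _⟩
  have hr0 : 0 ≤ r := (sum_nonneg fun _ _ => Real.sqrt_nonneg _).trans (hr 0)
  have hr1 : r < 1 := max_lt (hrow 0) (hrow 1)
  have hgeom : ∀ n,
      iidMarkovBhattacharyya w P π (n + 1) ≤ iidMarkovBhattacharyya w P π 1 * r ^ n := by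
    intro n
    induction n with
    | zero => simp
    | succ n ih =>
      calc iidMarkovBhattacharyya w P π (n + 2) ≤ r * iidMarkovBhattacharyya w P π (n + 1) :=
            iidMarkovBhattacharyya_succ_succ_le hw hP hr n
        _ ≤ r * (iidMarkovBhattacharyya w P π 1 * r ^ n) := by gcongr
        _ = iidMarkovBhattacharyya w P π 1 * r ^ (n + 1) := by ring
  rw [← tendsto_add_atTop_iff_nat 1]
  refine squeeze_zero (fun n => iidMarkovBhattacharyya_nonneg _) hgeom ?_
  simpa using (tendsto_pow_atTop_nhds_zero_of_lt_one hr0 hr1).const_mul _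

end Contraction

section Diagonal

variable {d : Type*} [Fintype d] [DecidableEq d]

open scoped MatrixOrder in
lemma psdSqrt_diagonal {v : d → ℝ} (hv : ∀ i, 0 ≤ v i) :
    psdSqrt (diagonal fun i => (v i : ℂ)) = diagonal fun i => ((√(v i) : ℝ) : ℂ) := by
  have hpsd : (diagonal fun i => (v i : ℂ)).PosSemidef :=
    PosSemidef.diagonal fun i => Complex.zero_le_real.mpr (hv i)
  have hsqrt : CFC.sqrt (diagonal fun i => (v i : ℂ)) = diagonal fun i => ((√(v i) : ℝ) : ℂ) := by
    refine CFC.sqrt_unique ?_ (nonneg_iff_posSemidef.mpr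
      (PosSemidef.diagonal fun i => Complex.zero_le_real.mpr (Real.sqrt_nonneg _)))
    rw [diagonal_mul_diagonal]
    congr! with i
    rw [← Complex.ofReal_mul, Real.mul_self_sqrt (hv i)]
  rw [psdSqrt, dif_pos hpsd, ← hsqrt, CFC.sqrt_eq_cfc,
    cfc_nnreal_eq_real _ _ (nonneg_iff_posSemidef.mpr hpsd), hpsd.1.cfc_eq]
  simp [IsHermitian.cfc, Function.comp_def, Real.coe_sqrt, Real.coe_toNNReal',
    Unitary.conjStarAlgAut_apply, max_eq_left (hpsd.eigenvalues_nonneg _)]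

lemma qFidelity_diagonal {a b : d → ℝ} (ha : ∀ i, 0 ≤ a i) (hb : ∀ i, 0 ≤ b i) :
    qFidelity (diagonal fun i => (a i : ℂ)) (diagonal fun i => (b i : ℂ)) =
      (∑ i, √(a i * b i)) ^ 2 := by
  have hconj : (diagonal fun i => ((√(b i) : ℝ) : ℂ)) * (diagonal fun i => (a i : ℂ)) *
      (diagonal fun i => ((√(b i) : ℝ) : ℂ)) = diagonal fun i => ((a i * b i : ℝ) : ℂ) := by
    rw [diagonal_mul_diagonal, diagonal_mul_diagonal]
    congr! with i
    rw [← Complex.ofReal_mul, ← Complex.ofReal_mul, mul_right_comm, Real.mul_self_sqrt (hb i),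
      mul_comm]
  rw [qFidelity, psdSqrt_diagonal hb, hconj,
    psdSqrt_diagonal fun i => mul_nonneg (ha i) (hb i), trace_diagonal]
  norm_cast

end Diagonal

lemma tensorPow_diagonal (v : Fin 2 → ℝ) (n : ℕ) :
    tensorPow (diagonal fun i => (v i : ℂ)) n = diagonal fun x => ((∏ i, v (x i) : ℝ) : ℂ) := by
  ext x y
  by_cases hxy : x = y
  · subst hxy
    simp [tensorPow]
  · obtain ⟨i, hi⟩ := Function.ne_iff.mp hxy
    rw [diagonal_apply_ne _ hxy]
    exact prod_eq_zero (mem_univ i) (diagonal_apply_ne _ hi)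

/-- If the entropy rate of the stationary Markov chain differs from the binary
entropy of its stationary marginal `q = ε/(ε+δ)`, then the Bhattacharyya
coefficient between the i.i.d. Bernoulli(q) measure and the Markov path measure
tends to `0`, and hence so does the fidelity `F(𝔐, ρ_st^⊗n)`. -/
theorem stmt17 (ε δ q : ℝ) (hε0 : 0 < ε) (hε1 : ε < 1) (hδ0 : 0 < δ) (hδ1 : δ < 1)
    (hq : q = ε / (ε + δ))
    (P : Matrix (Fin 2) (Fin 2) ℝ) (hP : P = !![1 - ε, ε; δ, 1 - δ])
    (π : Fin 2 → ℝ) (hπ : π = ![δ / (ε + δ), ε / (ε + δ)])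
    (hent : δ / (ε + δ) * binEnt ε + ε / (ε + δ) * binEnt δ ≠ binEnt q)
    (p : ∀ n : ℕ, (Fin n → Fin 2) → ℝ)
    (hiid : ∀ (n : ℕ) (x : Fin n → Fin 2),
      p n x = ∏ i : Fin n, (if x i = 1 then q else 1 - q))
    (𝔐 : ∀ n : ℕ, Matrix (Fin n → Fin 2) (Fin n → Fin 2) ℂ)
    (h𝔐 : ∀ n : ℕ, 𝔐 n =
      Matrix.diagonal (fun x : Fin n → Fin 2 => ((pathProb P π x : ℝ) : ℂ)))
    (ρst : Matrix (Fin 2) (Fin 2) ℂ)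
    (hρst : ρst = Matrix.diagonal (fun i => ((π i : ℝ) : ℂ))) :
    Tendsto (fun n : ℕ =>
      ∑ x : Fin n → Fin 2, Real.sqrt (p n x * pathProb P π x)) atTop (nhds 0) ∧
    Tendsto (fun n : ℕ => qFidelity (𝔐 n) (tensorPow ρst n)) atTop (nhds 0) := by
  subst hq
  have hεδ : ε + δ ≠ 1 := fun h => hent (entropyRate_eq_binEnt_of_add_eq_one h)
  have hπ0 : ∀ a, 0 ≤ π a := by
    simp only [hπ, Fin.forall_fin_two, cons_val_zero, cons_val_one]
    exact ⟨by positivity, by positivity⟩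
  have hP0 : ∀ a b, 0 ≤ P a b := by
    simp only [hP, Fin.forall_fin_two, of_apply, cons_val', cons_val_zero, cons_val_one,
      empty_val', cons_val_fin_one]
    refine ⟨⟨?_, ?_⟩, ?_, ?_⟩ <;> linarith
  have hp : ∀ n x, p n x = ∏ i, π (x i) := by
    have hmarg : ∀ a : Fin 2, (if a = 1 then ε / (ε + δ) else 1 - ε / (ε + δ)) = π a := by
      have hs : ε + δ ≠ 0 := by positivity
      simp only [hπ, Fin.forall_fin_two, Fin.isValue, zero_ne_one, ↓reduceIte, cons_val_zero,
        cons_val_one, and_true]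
      field_simp
      ring
    simp only [hiid, hmarg, forall_const]
  have hlim : Tendsto (iidMarkovBhattacharyya π P π) atTop (nhds 0) :=
    tendsto_iidMarkovBhattacharyya_zero hπ0 hP0 fun a => by
      rw [hπ, hP]
      exact twoStateChain_bhattacharyya_row_lt_one hε0 hε1 hδ0 hδ1 hεδ a
  have hfid : ∀ n, qFidelity (𝔐 n) (tensorPow ρst n) = iidMarkovBhattacharyya π P π n ^ 2 := by
    intro n
    rw [h𝔐, hρst, tensorPow_diagonal, qFidelity_diagonal (pathProb_nonneg hP0 hπ0)
      fun x => prod_nonneg fun i _ => hπ0 _, iidMarkovBhattacharyya]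
    simp only [mul_comm (pathProb _ _ _)]
  simp only [hp, hfid]
  exact ⟨hlim, by simpa using hlim.pow 2⟩
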